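/- If c ∈ C_m = {c ∈ R : Kdim(R/cR) < m}, then c is invertible in R^e: its inverse c^{-1} in Q lies in R^e. -/

import Mathlib

set_option linter.unusedVariables false

/-- `devLE k A` : the deviation (in the Gabriel–Rentschler sense) of the
poset `A` is `≤ k` (for `k : ℕ`).  `devLE 0 A` says every descending chain
eventually stabilizes (DCC), and `devLE (k+1) A` says that in any descending
chain all but finitely many of the factor intervals have deviation `≤ k`. -/
def devLE : ℕ → (A : Type*) → [inst : Preorder A] → Prop
  | 0, A, _ => ∀ f : ℕ → A, Antitone f → ∃ N, ∀ i, N ≤ i → f (i + 1) = f i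
  | (k+1), A, _ => ∀ f : ℕ → A, Antitone f →
      ∃ N, ∀ i, N ≤ i → devLE k (Set.Icc (f (i + 1)) (f i))

/-- The Gabriel–Rentschler Krull dimension of the right `R`-module `M`
(a module over `Rᵐᵒᵖ`) is `≤ k` : the deviation of its submodule lattice is `≤ k`. -/
def kdimLE (R M : Type*) [Ring R] [AddCommGroup M] [Module Rᵐᵒᵖ M] (k : ℕ) : Prop :=
  devLE k (Submodule Rᵐᵒᵖ M)

/-- `c` is a regular element of `R` (neither a left nor a right zero divisor). -/
def regElem (R : Type*) [Ring R] (c : R) : Prop :=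
  (∀ x : R, c * x = 0 → x = 0) ∧ (∀ x : R, x * c = 0 → x = 0)

/-- `C_m = {c ∈ R | Kdim(R/cR) < m}` (for `0 < m`, `Kdim < m` is `Kdim ≤ m-1`). -/
def rCm (R : Type*) [Ring R] (m : ℕ) : Set R :=
  {c | kdimLE R (R ⧸ Submodule.span Rᵐᵒᵖ ({c} : Set R)) (m - 1)}

/-- The m-Gabriel filter `g = {right ideals I | Kdim(R/I) < m}`. -/
def gFilt (R : Type*) [Ring R] (m : ℕ) : Set (Submodule Rᵐᵒᵖ R) :=
  {I | kdimLE R (R ⧸ I) (m - 1)}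

/-- A right ideal `P` is a (two-sided) prime ideal of `R`. -/
def isTwoSidedPrime (R : Type*) [Ring R] (P : Submodule Rᵐᵒᵖ R) : Prop :=
  (∀ a ∈ P, ∀ r : R, r * a ∈ P) ∧ P ≠ ⊤ ∧
    ∀ a b : R, (∀ r : R, a * r * b ∈ P) → a ∈ P ∨ b ∈ P

/-- `c ∈ C(P)` : `c` is regular modulo `P`. -/
def regModP (R : Type*) [Ring R] (P : Submodule Rᵐᵒᵖ R) (c : R) : Prop :=
  ∀ x : R, (c * x ∈ P → x ∈ P) ∧ (x * c ∈ P → x ∈ P)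

/-- `X_m` : the set of (two-sided) prime ideals `P` with `Kdim(R/P) = m`. -/
def xSet (R : Type*) [Ring R] (m : ℕ) : Set (Submodule Rᵐᵒᵖ R) :=
  {P | isTwoSidedPrime R P ∧ kdimLE R (R ⧸ P) m ∧ ¬ kdimLE R (R ⧸ P) (m - 1)}

/-- `V_m = ⋂_{P ∈ X_m} C(P)`. -/
def vSet (R : Type*) [Ring R] (m : ℕ) : Set R :=
  {v | ∀ P ∈ xSet R m, regModP R P v}

/-- Left multiplication by `a` as a right-module (`Rᵐᵒᵖ`-module) endomorphism of `R`. -/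
def lmulHom (R : Type*) [Ring R] (a : R) : R →ₗ[Rᵐᵒᵖ] R where
  toFun x := a * x
  map_add' x y := mul_add a x y
  map_smul' r x := by
    simp [MulOpposite.smul_eq_mul_unop, mul_assoc]

/-- `Q` is a classical right quotient ring of `R` via `f : R →+* Q` :
`f` is injective, regular elements of `R` become units in `Q`, and every
element of `Q` is a right fraction `f a * (f s)⁻¹`. -/
def isRightQuotientRing (R Q : Type*) [Ring R] [Ring Q] (f : R →+* Q) : Prop :=
  Function.Injective f ∧ (∀ s : R, regElem R s → IsUnit (f s)) ∧
    ∀ q : Q, ∃ a s : R, regElem R s ∧ q * f s = f a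

/-- `R^e = {q ∈ Q | qJ ⊆ R for some J in the m-Gabriel filter}`, as a subset of `Q`. -/
def reSet (R Q : Type*) [Ring R] [Ring Q] (f : R →+* Q) (m : ℕ) : Set Q :=
  {q | ∃ J ∈ gFilt R m, ∀ j ∈ J, ∃ r : R, q * f j = f r}

/-- The extension `A·R^e` of a set `A ⊆ R` : the additive subgroup of `Q`
generated by products `f a * q` with `a ∈ A`, `q ∈ R^e` (a right ideal of `R^e`). -/
def extSet (R Q : Type*) [Ring R] [Ring Q] (f : R →+* Q) (m : ℕ) (A : Set R) : Set Q :=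
  (AddSubgroup.closure {x : Q | ∃ a ∈ A, ∃ q ∈ reSet R Q f m, x = f a * q} : Set Q)

/-- The right `R`-module structure on `Q` induced by `f : R →+* Q`. -/
def qMod (R Q : Type*) [Ring R] [Ring Q] (f : R →+* Q) : Module Rᵐᵒᵖ Q :=
  Module.compHom Q (RingHom.op f)

/-! Once `c` is regular it is a unit of `Q`, and `c⁻¹ · cR ⊆ R` with `Kdim (R / cR) < m` puts `c⁻¹`
in `R^e`. A zero divisor `c` would produce a nonzero right ideal of Krull dimension
`≤ Kdim (R / cR) < n`: if `x c = 0` then `xR` is a quotient of `R / cR`; if `c x = 0` then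
`ann(c) ∩ cᵗR = 0` for large `t` (Fitting), so `ann(c)` embeds in `R / cᵗR`, which is filtered by
quotients of `R / cR`.

In a prime right noetherian ring, however, a nonzero right ideal of dimension `≤ d` forces
`Kdim R ≤ d`. The largest right ideal `N` of dimension `≤ d` is two-sided and nonzero, hence meets
every nonzero right ideal. Starting from `M ⊓ K = ⊥` with `Kdim (R / K) ≤ d`, pick `z ∈ K ∩ N` with
`zR ∩ ann(z) = 0` (nonzero right ideals are not nil, by primeness) and pass to `M + zR` and
`K ∩ ann(z)`; since `R / ann(z) ≅ zR ⊆ N`, the dimension bound survives. The ascending chain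
condition on `M` ends this only at `K = 0`. -/

open Set (Icc)

section Deviation

theorem devLE_of_strictMono {k : ℕ} {A B : Type*} [PartialOrder A] [Preorder B] {g : A → B}
    (hg : StrictMono g) (hB : devLE k B) : devLE k A := by
  induction k generalizing A B with
  | zero =>
    intro f hf
    obtain ⟨N, hN⟩ := hB (g ∘ f) (hg.monotone.comp_antitone hf)
    exact ⟨N, fun i hi => (hf (Nat.le_succ i)).eq_of_not_lt fun h => (hg h).ne (hN i hi)⟩
  | succ k ih =>
    intro f hf
    obtain ⟨N, hN⟩ := hB (g ∘ f) (hg.monotone.comp_antitone hf)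
    exact ⟨N, fun i hi => ih (g := fun x => ⟨g x, hg.monotone x.2.1, hg.monotone x.2.2⟩)
      (fun _ _ hxy => hg hxy) (hN i hi)⟩

theorem OrderIso.devLE_iff {k : ℕ} {A B : Type*} [PartialOrder A] [PartialOrder B]
    (e : A ≃o B) : devLE k A ↔ devLE k B :=
  ⟨devLE_of_strictMono e.symm.strictMono, devLE_of_strictMono e.strictMono⟩

theorem devLE_of_subsingleton (k : ℕ) (A : Type*) [Preorder A] [Subsingleton A] : devLE k A := by
  induction k generalizing A with
  | zero => exact fun f _ => ⟨0, fun _ _ => Subsingleton.elim _ _⟩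
  | succ k ih => exact fun f _ => ⟨0, fun i _ => ih _⟩

theorem devLE_Icc_self {A : Type*} [PartialOrder A] (k : ℕ) (a : A) : devLE k (Icc a a) := by
  rw [Set.Icc_self]
  exact devLE_of_subsingleton k _

theorem devLE_mono {A : Type*} [PartialOrder A] {k k' : ℕ} (hk : k ≤ k') (h : devLE k A) :
    devLE k' A := by
  induction hk with
  | refl => exact h
  | step _ ih =>
    exact fun f _ => ⟨0, fun i _ => devLE_of_strictMono (Subtype.strictMono_coe _) ih⟩

theorem devLE_prod {k : ℕ} {A B : Type*} [PartialOrder A] [PartialOrder B]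
    (hA : devLE k A) (hB : devLE k B) : devLE k (A × B) := by
  induction k generalizing A B with
  | zero =>
    intro f hf
    obtain ⟨N₁, h₁⟩ := hA (Prod.fst ∘ f) (monotone_fst.comp_antitone hf)
    obtain ⟨N₂, h₂⟩ := hB (Prod.snd ∘ f) (monotone_snd.comp_antitone hf)
    exact ⟨max N₁ N₂, fun i hi =>
      Prod.ext (h₁ i (le_of_max_le_left hi)) (h₂ i (le_of_max_le_right hi))⟩
  | succ k ih =>
    intro f hf
    obtain ⟨N₁, h₁⟩ := hA (Prod.fst ∘ f) (monotone_fst.comp_antitone hf)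
    obtain ⟨N₂, h₂⟩ := hB (Prod.snd ∘ f) (monotone_snd.comp_antitone hf)
    refine ⟨max N₁ N₂, fun i hi => devLE_of_strictMono
      (g := fun x => (⟨x.1.1, x.2.1.1, x.2.2.1⟩, ⟨x.1.2, x.2.1.2, x.2.2.2⟩)) ?_
      (ih (h₁ i (le_of_max_le_left hi)) (h₂ i (le_of_max_le_right hi)))⟩
    refine Monotone.strictMono_of_injective (fun x y h => ⟨h.1, h.2⟩) fun x y h => ?_
    exact Subtype.ext (Prod.ext (congrArg (·.1.1) h) (congrArg (·.2.1) h))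

theorem devLE_Icc_of_le {A : Type*} [PartialOrder A] {k : ℕ} {a a' b b' : A} (ha : a ≤ a')
    (hb : b' ≤ b) (h : devLE k (Icc a b)) : devLE k (Icc a' b') :=
  devLE_of_strictMono (g := Set.inclusion (Set.Icc_subset_Icc ha hb)) (fun _ _ hxy => hxy) h

theorem devLE_of_devLE_Icc_bot_top {A : Type*} [PartialOrder A] [BoundedOrder A] {k : ℕ}
    (h : devLE k (Icc (⊥ : A) ⊤)) : devLE k A :=
  devLE_of_strictMono (g := fun x => ⟨x, bot_le, le_top⟩) (fun _ _ hxy => hxy) h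

variable {α : Type*} [Lattice α] [IsModularLattice α] {k : ℕ}

theorem devLE_Icc_trans {a b c : α} (hab : a ≤ b) (hbc : b ≤ c)
    (h₁ : devLE k (Icc a b)) (h₂ : devLE k (Icc b c)) : devLE k (Icc a c) :=
  devLE_of_strictMono
    (g := fun x =>
      (⟨x ⊓ b, le_inf x.2.1 hab, inf_le_right⟩, ⟨x ⊔ b, le_sup_right, sup_le x.2.2 hbc⟩))
    (fun _ _ hxy => strictMono_inf_prod_sup (z := b) hxy) (devLE_prod h₁ h₂)

theorem devLE_Icc_inf_iff (a b : α) : devLE k (Icc (a ⊓ b) a) ↔ devLE k (Icc b (a ⊔ b)) :=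
  (infIccOrderIsoIccSup a b).devLE_iff

theorem devLE_Icc_bot_sup [OrderBot α] {a b : α} (ha : devLE k (Icc ⊥ a))
    (hb : devLE k (Icc ⊥ b)) : devLE k (Icc ⊥ (a ⊔ b)) := by
  have hab : devLE k (Icc a (b ⊔ a)) :=
    (devLE_Icc_inf_iff b a).mp (devLE_Icc_of_le bot_le le_rfl hb)
  rw [sup_comm] at hab
  exact devLE_Icc_trans bot_le le_sup_left ha hab

theorem devLE_Icc_inf_of_devLE_Icc_top [OrderTop α] (a : α) {b : α} (h : devLE k (Icc b ⊤)) :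
    devLE k (Icc (a ⊓ b) a) :=
  (devLE_Icc_inf_iff a b).mpr (devLE_Icc_of_le le_rfl le_top h)

end Deviation

section Modules

variable {A M N : Type*} [Ring A] [AddCommGroup M] [Module A M] [AddCommGroup N] [Module A N]
  {k : ℕ}

open Submodule LinearMap

def iccComapOrderIso (φ : M →ₗ[A] N) {a b : Submodule A N} (hab : a ≤ b) (hb : b ≤ range φ) :
    Icc (a.comap φ) (b.comap φ) ≃o Icc a b :=
  Equiv.toOrderIso
    { toFun y := ⟨y.1.map φ,
        (map_comap_eq_self (hab.trans hb)).symm.le.trans (map_mono y.2.1),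
        (map_mono y.2.2).trans (map_comap_le φ b)⟩
      invFun x := ⟨x.1.comap φ, comap_mono x.2.1, comap_mono x.2.2⟩
      left_inv y := Subtype.ext <| comap_map_eq_self <|
        (comap_bot φ).symm.le.trans <| (comap_mono bot_le).trans y.2.1
      right_inv x := Subtype.ext <| map_comap_eq_self (x.2.2.trans hb) }
    (fun _ _ h => map_mono h) (fun _ _ h => comap_mono h)

theorem devLE_Icc_of_quotient {p : Submodule A M} (h : devLE k (Submodule A (M ⧸ p))) :
    devLE k (Icc p ⊤) :=
  devLE_of_strictMono (g := (comapMkQRelIso p).symm ∘ fun x => ⟨x.1, x.2.1⟩)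
    ((comapMkQRelIso p).symm.strictMono.comp fun _ _ hxy => hxy) h

theorem devLE_Icc_ker_top {φ : M →ₗ[A] N} (h : devLE k (Icc ⊥ (range φ))) :
    devLE k (Icc (ker φ) ⊤) := by
  have hφ : (range φ).comap φ = ⊤ := range_le_iff_comap.mp le_rfl
  rwa [← comap_bot, ← hφ, (iccComapOrderIso φ bot_le le_rfl).devLE_iff]

theorem devLE_Icc_bot_range_of_le_ker {φ : M →ₗ[A] N} {p : Submodule A M} (hp : p ≤ ker φ)
    (h : devLE k (Icc p ⊤)) : devLE k (Icc ⊥ (range φ)) := by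
  rw [← (iccComapOrderIso φ bot_le le_rfl).devLE_iff, comap_bot]
  exact devLE_Icc_of_le hp le_top h

theorem devLE_Icc_bot_map (φ : M →ₗ[A] N) {P : Submodule A M} (h : devLE k (Icc ⊥ P)) :
    devLE k (Icc ⊥ (P.map φ)) := by
  have h' : devLE k (Icc (ker φ) (P ⊔ ker φ)) :=
    (devLE_Icc_inf_iff P (ker φ)).mp (devLE_Icc_of_le bot_le le_rfl h)
  rw [← comap_map_eq, ← comap_bot] at h'
  exact (iccComapOrderIso φ bot_le map_le_range).devLE_iff.mp h'

theorem devLE_Icc_range_pow (φ : Module.End A M) (h : devLE k (Icc (range φ) ⊤)) (i : ℕ) :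
    devLE k (Icc (range (φ ^ i)) ⊤) := by
  induction i with
  | zero =>
    rw [pow_zero, Module.End.one_eq_id, range_id]
    exact devLE_Icc_self k ⊤
  | succ i ih =>
    have hle : range (φ ^ (i + 1)) ≤ range (φ ^ i) := by
      rw [pow_succ]; exact range_comp_le_range _ _
    refine devLE_Icc_trans hle le_top ?_ ih
    have hφ : (range (φ ^ i)).comap (φ ^ i) = ⊤ := range_le_iff_comap.mp le_rfl
    rw [← (iccComapOrderIso (φ ^ i) hle le_rfl).devLE_iff, hφ]
    refine devLE_Icc_of_le ?_ le_rfl h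
    rintro _ ⟨x, rfl⟩
    exact ⟨x, by rw [pow_succ]; rfl⟩

theorem devLE_Icc_bot_ker [IsNoetherian A M] (φ : Module.End A M) (h : devLE k (Icc (range φ) ⊤)) :
    devLE k (Icc ⊥ (ker φ)) := by
  obtain ⟨t, ht, ht1⟩ :=
    (φ.eventually_disjoint_ker_pow_range_pow.and (Filter.eventually_ge_atTop 1)).exists
  have hdisj : ker φ ⊓ range (φ ^ t) = ⊥ := by
    refine disjoint_iff.mp (ht.mono_left ?_)
    obtain ⟨s, rfl⟩ := Nat.exists_eq_add_of_le' ht1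
    rw [pow_succ, Module.End.mul_eq_comp]
    exact ker_le_ker_comp φ (φ ^ s)
  have := devLE_Icc_inf_of_devLE_Icc_top (ker φ) (devLE_Icc_range_pow φ h t)
  rwa [hdisj] at this

theorem exists_greatest_devLE_Icc_bot [IsNoetherian A M] (k : ℕ) :
    ∃ P : Submodule A M, devLE k (Icc ⊥ P) ∧ ∀ P', devLE k (Icc ⊥ P') → P' ≤ P := by
  obtain ⟨P, hP, hmax⟩ := set_has_maximal_iff_noetherian.mpr ‹_›
    {P : Submodule A M | devLE k (Icc ⊥ P)} ⟨⊥, devLE_Icc_self k ⊥⟩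
  exact ⟨P, hP, fun P' hP' => by
    by_contra h
    exact hmax _ (devLE_Icc_bot_sup hP hP') (left_lt_sup.mpr h)⟩

end Modules

section RightIdeals

variable {R : Type*} [Ring R]

open Submodule LinearMap

theorem mul_mem_of_mem_rightIdeal {p : Submodule Rᵐᵒᵖ R} {x : R} (hx : x ∈ p) (r : R) :
    x * r ∈ p :=
  p.smul_mem (MulOpposite.op r) hx

theorem range_lmulHom (a : R) : range (lmulHom R a) = span Rᵐᵒᵖ {a} := by
  ext x
  rw [mem_span_singleton, mem_range]
  exact ⟨fun ⟨y, hy⟩ => ⟨MulOpposite.op y, hy⟩, fun ⟨y, hy⟩ => ⟨y.unop, hy⟩⟩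

theorem range_lmulHom_le_iff {a : R} {p : Submodule Rᵐᵒᵖ R} : range (lmulHom R a) ≤ p ↔ a ∈ p := by
  rw [range_lmulHom, span_singleton_le_iff_mem]

theorem inf_ne_bot_of_mul_mem
    (hprime : ∀ a b : R, (∀ r : R, a * r * b = 0) → a = 0 ∨ b = 0)
    {K N : Submodule Rᵐᵒᵖ R} (hK : K ≠ ⊥) (hN : N ≠ ⊥) (hNtwo : ∀ r, ∀ x ∈ N, r * x ∈ N) :
    K ⊓ N ≠ ⊥ := by
  intro hKN
  obtain ⟨x, hxK, hx0⟩ := (Submodule.ne_bot_iff K).mp hK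
  obtain ⟨u, huN, hu0⟩ := (Submodule.ne_bot_iff N).mp hN
  refine hx0 ((hprime x u fun r => ?_).resolve_right hu0)
  have : x * r * u ∈ K ⊓ N :=
    ⟨mul_assoc x r u ▸ mul_mem_of_mem_rightIdeal hxK (r * u), hNtwo (x * r) u huN⟩
  rwa [hKN, mem_bot] at this

variable [IsNoetherian Rᵐᵒᵖ R]

theorem exists_mul_mul_eq_zero_of_forall_isNilpotent {L : Ideal R} (hL : L ≠ ⊥)
    (hnil : ∀ y ∈ L, IsNilpotent y) : ∃ z ∈ L, z ≠ 0 ∧ ∀ r : R, z * r * z = 0 := by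
  obtain ⟨_, ⟨z, hzL, hz0, rfl⟩, hmax⟩ := set_has_maximal_iff_noetherian.mpr ‹_›
    {K | ∃ y ∈ L, y ≠ 0 ∧ K = ker (lmulHom R y)} <| by
      obtain ⟨y, hy, hy0⟩ := (Submodule.ne_bot_iff L).mp hL
      exact ⟨_, y, hy, hy0, rfl⟩
  refine ⟨z, hzL, hz0, fun r => ?_⟩
  set w := r * z with hw_def
  have hwL : w ∈ L := L.mul_mem_left r hzL
  obtain hw | hw := eq_or_ne w 0
  · rw [mul_assoc, ← hw_def, hw, mul_zero]
  have := nontrivial_of_ne w 0 hw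
  obtain ⟨k, hk⟩ : ∃ k, nilpotencyClass w = k + 2 := by
    have h₀ := pos_nilpotencyClass_iff.mpr (hnil w hwL)
    have h₁ := (nilpotencyClass_eq_one (x := w)).not.mpr hw
    exact ⟨nilpotencyClass w - 2, by omega⟩
  obtain ⟨hwk₂, hwk₁⟩ := nilpotencyClass_eq_succ_iff.mp hk
  -- `w ^ (k + 1) ∈ L` is nonzero and kills `ker z`, so maximality of `ker z` forces equality;
  -- as `w ^ (k + 1)` kills `w`, so does `z`.
  have hker : ker (lmulHom R z) = ker (lmulHom R (w ^ (k + 1))) := by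
    refine (lt_or_eq_of_le fun t (ht : z * t = 0) => ?_).resolve_left
      (hmax _ ⟨_, pow_succ w k ▸ L.mul_mem_left _ hwL, hwk₁, rfl⟩)
    change w ^ (k + 1) * t = 0
    rw [pow_succ, hw_def, mul_assoc, mul_assoc, ht, mul_zero, mul_zero]
  have hw_mem : w ∈ ker (lmulHom R (w ^ (k + 1))) := by
    change w ^ (k + 1) * w = 0
    rwa [← pow_succ]
  rw [← hker] at hw_mem
  rw [mul_assoc]
  exact hw_mem

theorem exists_not_isNilpotent_mem
    (hprime : ∀ a b : R, (∀ r : R, a * r * b = 0) → a = 0 ∨ b = 0)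
    {B : Submodule Rᵐᵒᵖ R} (hB : B ≠ ⊥) : ∃ z ∈ B, ¬IsNilpotent z := by
  by_contra! hnil
  obtain ⟨b, hb, hb0⟩ := (Submodule.ne_bot_iff B).mp hB
  obtain ⟨z, -, hz0, hzrz⟩ := exists_mul_mul_eq_zero_of_forall_isNilpotent (L := Ideal.span {b})
    ((Submodule.ne_bot_iff _).mpr ⟨b, Ideal.mem_span_singleton_self b, hb0⟩) <| by
      intro _ hy
      obtain ⟨s, rfl⟩ := Ideal.mem_span_singleton'.mp hy
      obtain ⟨n, hn⟩ := hnil (b * s) (mul_mem_of_mem_rightIdeal hb s)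
      exact ⟨n + 1, by rw [pow_succ, ← mul_assoc, mul_pow_mul, hn, mul_zero, zero_mul]⟩
  exact hz0 ((hprime z z hzrz).elim id id)

theorem exists_ne_zero_disjoint_range_ker {B : Submodule Rᵐᵒᵖ R} {y : R} (hyB : y ∈ B)
    (hy : ¬IsNilpotent y) :
    ∃ z ∈ B, z ≠ 0 ∧ Disjoint (range (lmulHom R z)) (ker (lmulHom R z)) := by
  obtain ⟨_, ⟨z, hzB, hz, rfl⟩, hmax⟩ := set_has_maximal_iff_noetherian.mpr ‹_›
    {K | ∃ y ∈ B, ¬IsNilpotent y ∧ K = ker (lmulHom R y)} ⟨_, y, hyB, hy, rfl⟩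
  have hz2 : ¬IsNilpotent (z * z) := fun ⟨n, hn⟩ => hz ⟨2 * n, by rwa [pow_mul, sq]⟩
  have hker : ker (lmulHom R z) = ker (lmulHom R (z * z)) := by
    refine (lt_or_eq_of_le fun t (ht : z * t = 0) => ?_).resolve_left
      (hmax _ ⟨_, mul_mem_of_mem_rightIdeal hzB z, hz2, rfl⟩)
    change z * z * t = 0
    rw [mul_assoc, ht, mul_zero]
  refine ⟨z, hzB, fun h => hz (h ▸ IsNilpotent.zero), disjoint_iff.mpr (eq_bot_iff.mpr ?_)⟩
  rintro _ ⟨⟨r, rfl⟩, hr⟩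
  have hr' : r ∈ ker (lmulHom R (z * z)) := by
    change z * z * r = 0
    rw [mul_assoc]
    exact hr
  rw [← hker] at hr'
  exact (mem_bot _).mpr hr'

end RightIdeals

section PrimeNoetherian

variable {R : Type*} [Ring R] [IsNoetherian Rᵐᵒᵖ R]

open Submodule LinearMap

theorem kdimLE_of_devLE_Icc_bot
    (hprime : ∀ a b : R, (∀ r : R, a * r * b = 0) → a = 0 ∨ b = 0)
    {d : ℕ} {W : Submodule Rᵐᵒᵖ R} (hW : W ≠ ⊥)
    (hdW : devLE d (Icc ⊥ W)) : kdimLE R R d := by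
  obtain ⟨N, hN, hNmax⟩ := exists_greatest_devLE_Icc_bot (A := Rᵐᵒᵖ) (M := R) d
  have hNtwo : ∀ r, ∀ x ∈ N, r * x ∈ N := fun r x hx =>
    hNmax _ (devLE_Icc_bot_map (lmulHom R r) hN) ⟨x, hx, rfl⟩
  have hN0 : N ≠ ⊥ := ne_bot_of_le_ne_bot hW (hNmax W hdW)
  obtain ⟨M, ⟨K, hMK, hK⟩, hmax⟩ := set_has_maximal_iff_noetherian.mpr ‹_›
    {M | ∃ K, M ⊓ K = ⊥ ∧ devLE d (Icc K ⊤)} ⟨⊥, ⊤, bot_inf_eq ⊤, devLE_Icc_self d ⊤⟩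
  obtain rfl | hK0 := eq_or_ne K ⊥
  · exact devLE_of_devLE_Icc_bot_top hK
  obtain ⟨y, hyKN, hy⟩ :=
    exists_not_isNilpotent_mem hprime (inf_ne_bot_of_mul_mem hprime hK0 hN0 hNtwo)
  obtain ⟨z, ⟨hzK, hzN⟩, hz0, hdisj⟩ := exists_ne_zero_disjoint_range_ker hyKN hy
  have hlt : M < M ⊔ range (lmulHom R z) := by
    refine left_lt_sup.mpr fun h => hz0 ?_
    have : z ∈ M ⊓ K := ⟨range_lmulHom_le_iff.mp h, hzK⟩
    rwa [hMK, mem_bot] at this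
  have hcompl : (M ⊔ range (lmulHom R z)) ⊓ (K ⊓ ker (lmulHom R z)) = ⊥ := by
    rw [← inf_assoc, sup_comm, sup_inf_assoc_of_le M (range_lmulHom_le_iff.mpr hzK), hMK,
      sup_bot_eq, disjoint_iff.mp hdisj]
  have hdev : devLE d (Icc (K ⊓ ker (lmulHom R z)) ⊤) :=
    devLE_Icc_trans inf_le_left le_top (devLE_Icc_inf_of_devLE_Icc_top K (devLE_Icc_ker_top
      (devLE_Icc_of_le le_rfl (range_lmulHom_le_iff.mpr hzN) hN))) hK
  exact (hmax _ ⟨_, hcompl, hdev⟩ hlt).elim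

theorem regElem_of_devLE_Icc_span {c : R} {d : ℕ}
    (hsmall : ∀ W : Submodule Rᵐᵒᵖ R, W ≠ ⊥ → ¬devLE d (Icc ⊥ W))
    (hc : devLE d (Icc (span Rᵐᵒᵖ {c}) ⊤)) : regElem R c := by
  rw [← range_lmulHom] at hc
  refine ⟨fun x hx => by_contra fun hx0 => ?_, fun x hx => by_contra fun hx0 => ?_⟩
  · exact hsmall _ ((Submodule.ne_bot_iff _).mpr ⟨x, hx, hx0⟩) (devLE_Icc_bot_ker _ hc)
  · have hxc : c ∈ ker (lmulHom R x) := hx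
    exact hsmall _ ((Submodule.ne_bot_iff _).mpr ⟨x, range_lmulHom_le_iff.mp le_rfl, hx0⟩)
      (devLE_Icc_bot_range_of_le_ker (range_lmulHom_le_iff.mpr hxc) hc)

end PrimeNoetherian

theorem units_inv_mem_reSet {R Q : Type*} [Ring R] [Ring Q] {f : R →+* Q} {m : ℕ} {c : R}
    (hc : c ∈ rCm R m) {u : Qˣ} (hu : ↑u = f c) : ↑u⁻¹ ∈ reSet R Q f m := by
  refine ⟨Submodule.span Rᵐᵒᵖ {c}, hc, fun j hj => ?_⟩
  obtain ⟨a, rfl⟩ := Submodule.mem_span_singleton.mp hj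
  refine ⟨a.unop, ?_⟩
  rw [MulOpposite.smul_eq_mul_unop, map_mul, ← hu, ← mul_assoc, Units.inv_mul, one_mul]

theorem stmt13_general (R : Type) [Ring R] [IsNoetherian Rᵐᵒᵖ R]
    (hprime : ∀ a b : R, (∀ r : R, a * r * b = 0) → a = 0 ∨ b = 0)
    (n m : ℕ) (hmn : m < n)
    (hdim : kdimLE R R n ∧ ¬ kdimLE R R (n - 1))
    (Q : Type) [Ring Q] (f : R →+* Q) (hQ : isRightQuotientRing R Q f) :
    ∀ c ∈ rCm R m, ∃ q ∈ reSet R Q f m, f c * q = 1 ∧ q * f c = 1 := by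
  intro c hc
  have hsmall : ∀ W : Submodule Rᵐᵒᵖ R, W ≠ ⊥ → ¬devLE (n - 1) (Icc ⊥ W) :=
    fun W hW h => hdim.2 (kdimLE_of_devLE_Icc_bot hprime hW h)
  have hreg : regElem R c :=
    regElem_of_devLE_Icc_span hsmall (devLE_mono (by omega) (devLE_Icc_of_quotient hc))
  obtain ⟨u, hu⟩ := hQ.2.1 c hreg
  exact ⟨↑u⁻¹, units_inv_mem_reSet hc hu, by rw [← hu, Units.mul_inv], by rw [← hu, Units.inv_mul]⟩

theorem stmt13 (R : Type) [Ring R] [Nontrivial R] [IsNoetherian Rᵐᵒᵖ R]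
    (hprime : ∀ a b : R, (∀ r : R, a * r * b = 0) → a = 0 ∨ b = 0)
    (n m : ℕ) (hm : 0 < m) (hmn : m < n)
    (hdim : kdimLE R R n ∧ ¬ kdimLE R R (n - 1))
    (Q : Type) [Ring Q] (f : R →+* Q) (hQ : isRightQuotientRing R Q f) :
    ∀ c ∈ rCm R m, ∃ q ∈ reSet R Q f m, f c * q = 1 ∧ q * f c = 1 :=
  stmt13_general R hprime n m hmn hdim Q f hQ
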